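/- For all real numbers a ∈ [0, 1] and b ∈ (0, 1), kl(a, b) ≥ a·log(1/b) − log 2, where kl(a,b) = a log(a/b) + (1−a) log((1−a)/(1−b)) (with the conventions 0·log 0 = 0). -/
import Mathlib

open Real

/-- Kullback–Leibler divergence between Bernoulli(a) and Bernoulli(b), with the
convention `0 * log 0 = 0` (automatic since `Real.log 0 = 0`). -/
noncomputable def klBer (a b : ℝ) : ℝ :=
  a * Real.log (a / b) + (1 - a) * Real.log ((1 - a) / (1 - b))

theorem stmt_10 (a b : ℝ) (ha0 : 0 ≤ a) (ha1 : a ≤ 1) (hb0 : 0 < b) (hb1 : b < 1) :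
    a * Real.log (1 / b) - Real.log 2 ≤ klBer a b := by
  have hb0' : b ≠ 0 := ne_of_gt hb0
  have h1b : (0:ℝ) < 1 - b := by linarith
  have hlog1b : Real.log (1 - b) ≤ 0 := Real.log_nonpos (by linarith) (by linarith)
  have hlog2 : (0:ℝ) < Real.log 2 := Real.log_pos (by norm_num)
  rcases eq_or_lt_of_le ha0 with h0 | h0
  · -- a = 0
    subst h0
    simp only [klBer, zero_mul, sub_zero, zero_add, one_mul, one_div]
    rw [Real.log_inv]
    nlinarith
  rcases eq_or_lt_of_le ha1 with h1 | h1
  · -- a = 1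
    subst h1
    simp only [klBer, sub_self, zero_mul, add_zero, one_mul, one_div, div_eq_mul_inv]
    linarith
  -- 0 < a < 1
  have h1a : (0:ℝ) < 1 - a := by linarith
  have key : Real.binEntropy a ≤ Real.log 2 := Real.binEntropy_le_log_two
  rw [Real.binEntropy, Real.log_inv, Real.log_inv] at key
  have e1 : Real.log (a / b) = Real.log a - Real.log b :=
    Real.log_div (ne_of_gt h0) hb0'
  have e2 : Real.log ((1 - a) / (1 - b)) = Real.log (1 - a) - Real.log (1 - b) :=
    Real.log_div (ne_of_gt h1a) (ne_of_gt h1b)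
  rw [klBer, e1, e2, one_div, Real.log_inv]
  nlinarith [mul_nonneg h1a.le (neg_nonneg.mpr hlog1b)]
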